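/- Let v₁ = (0,0,0), v₂ = (10000,0,0), v₃ = (3086,7225,0), v₄ = (3093,−2773,−206), v₅ = (6857,5129,4632), v₆ = (−2809,2567,4514), v₇ = (5157,6374,−183), v₈ = (−4789,6789,767), v₉ = (3281,2871,5184), v₁₀ = (9811,242,−1919) in ℝ³, and define edge vectors eᵢ = v_{i+1} − vᵢ for i = 1, …, 9 and e₁₀ = v₁ − v₁₀. Then there is no w ∈ ℝ³ such that (−1)^{i+1} (w · eᵢ) > 0 for every i ∈ {1, …, 10}. -/

import Mathlib

/-!
Gordan's alternative, easy direction: the sign-adjusted edges `(-1)^i • edge8_8 i` for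
`i = 0, 1, 5, 7` admit a vanishing positive combination, so no `w` has positive dot product with
all four of them.
-/

/-- The vertices of the paper's 10-stick polygonal realization of the knot `8_8`.
Here `vert8_8 i` is the paper's vertex `v_(i+1)`. -/
noncomputable def vert8_8 : Fin 10 → (Fin 3 → ℝ) :=
  ![![0, 0, 0], ![10000, 0, 0], ![3086, 7225, 0], ![3093, -2773, -206], ![6857, 5129, 4632], ![-2809, 2567, 4514], ![5157, 6374, -183], ![-4789, 6789, 767], ![3281, 2871, 5184], ![9811, 242, -1919]]

/-- The edge vectors `eᵢ = v_(i+1) − vᵢ` (cyclically, so `e₁₀ = v₁ − v₁₀`);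
here `edge8_8 i` is the paper's `e_(i+1)`, using wrap-around addition on `Fin 10`. -/
noncomputable def edge8_8 (i : Fin 10) : Fin 3 → ℝ :=
  vert8_8 (i + 1) - vert8_8 i

theorem not_forall_pos_dotProduct_of_sum_smul_eq_zero {𝕜 ι m : Type*} [Field 𝕜] [LinearOrder 𝕜]
    [IsStrictOrderedRing 𝕜] [Fintype m] {s : Finset ι} (hs : s.Nonempty) {c : ι → 𝕜}
    (hc : ∀ i ∈ s, 0 < c i) {u : ι → m → 𝕜} (hu : ∑ i ∈ s, c i • u i = 0) (w : m → 𝕜) :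
    ¬ ∀ i ∈ s, 0 < w ⬝ᵥ u i := by
  intro hw
  have hpos : 0 < ∑ i ∈ s, c i * (w ⬝ᵥ u i) :=
    Finset.sum_pos (fun i hi => mul_pos (hc i hi) (hw i hi)) hs
  have hzero : ∑ i ∈ s, c i * (w ⬝ᵥ u i) = 0 := by
    simp_rw [← smul_eq_mul, ← dotProduct_smul, ← dotProduct_sum, hu, dotProduct_zero]
  exact hpos.ne' hzero

/-- The positive solution, unique up to scaling, of `∑ cᵢ (-1)^i eᵢ = 0` supported on
`i ∈ {0, 1, 5, 7}` (three equations in four unknowns). -/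
noncomputable def edgeWeights8_8 : Fin 10 → ℝ :=
  ![36936063773, 1133805000, 0, 0, 0, 22794875000, 0, 24239875000, 0, 0]

theorem sum_smul_signed_edge8_8_eq_zero :
    ∑ i ∈ ({0, 1, 5, 7} : Finset (Fin 10)), edgeWeights8_8 i •
        ((-1 : ℝ) ^ (i : ℕ) • edge8_8 i) = 0 := by
  ext j
  fin_cases j <;> simp [Finset.sum_insert, edgeWeights8_8, edge8_8, vert8_8] <;> norm_num

/-- There is no `w ∈ ℝ³` such that `(−1)^(i+1) (w · eᵢ) > 0` for every
`i ∈ {1, …, 10}`: no projection of this polygon (the knot `8_8`) to a line has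
5 local maxima. (With 0-based indexing `i : Fin 10`, the sign is `(−1)^i`.) -/
theorem no_alternating_direction_8_8 :
    ¬ ∃ w : Fin 3 → ℝ, ∀ i : Fin 10,
        0 < (-1 : ℝ) ^ (i : ℕ) * ∑ j : Fin 3, w j * edge8_8 i j := by
  rintro ⟨w, hw⟩
  refine not_forall_pos_dotProduct_of_sum_smul_eq_zero ?_ ?_
    sum_smul_signed_edge8_8_eq_zero w fun i _ => ?_
  · exact ⟨0, by simp⟩
  · simp [edgeWeights8_8]
  · rw [dotProduct_smul, smul_eq_mul]
    exact hw i
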